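/- Assume V : ℝ → [0,∞) satisfies (H^V). Then c̄ = c⋆⋆, where c⋆⋆ := inf{ (3·7^{1/3}/4) · ( ∫_ℝ∫_ℝ |g'(x)−g'(y)|²/|x−y|² dx dy )^{1/3} · ( ∫_ℝ V(g(x)) dx )^{2/3} : g ∈ H^{3/2}_loc(ℝ), g(−t) = α and g(t) = β for all t ≥ 1 }. -/

import Mathlib

open MeasureTheory Set Filter Topology ENNReal

noncomputable section

/-- Squared Gagliardo `H^{1/2}` seminorm of `g` over the set `s ⊆ ℝ`. -/
def halfSemi (g : ℝ → ℝ) (s : Set ℝ) : ℝ≥0∞ :=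
  ∫⁻ p in s ×ˢ s, ENNReal.ofReal ((g p.1 - g p.2) ^ 2 / (p.1 - p.2) ^ 2)

/-- `f ∈ H²_loc(ℝ)`, encoded through a concrete derivative `f'` and a second
derivative `f''` which is the (locally integrable) a.e. derivative of `f'`. -/
def IsH2Profile (f f' f'' : ℝ → ℝ) : Prop :=
  (∀ t : ℝ, HasDerivAt f (f' t) t) ∧
  (∀ s t : ℝ, IntervalIntegrable f'' volume s t) ∧
  (∀ s t : ℝ, f' t - f' s = ∫ x in s..t, f'' x)

/-- `f ∈ H²_loc` on the set `s`. -/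
def IsH2ProfileOn (s : Set ℝ) (f f' f'' : ℝ → ℝ) : Prop :=
  (∀ t ∈ s, HasDerivAt f (f' t) t) ∧
  (∀ r ∈ s, ∀ t ∈ s, IntervalIntegrable f'' volume r t ∧ f' t - f' r = ∫ x in r..t, f'' x)

/-- `f` locally absolutely continuous with derivative `f'` (the `H^{3/2}_loc` model:
`f'` is the a.e. derivative of `f`). -/
def IsACProfile (f f' : ℝ → ℝ) : Prop :=
  (∀ s t : ℝ, IntervalIntegrable f' volume s t) ∧
  (∀ s t : ℝ, f t - f s = ∫ x in s..t, f' x)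

/-- The optimal interior transition energy `m`. -/
def mConst (W : ℝ → ℝ) (a b : ℝ) : ℝ :=
  sInf {e : ℝ | ∃ (f f' f'' : ℝ → ℝ) (R : ℝ), 0 < R ∧ IsH2Profile f f' f'' ∧
    (∀ t : ℝ, R ≤ t → f (-t) = a ∧ f t = b) ∧
    (∫⁻ t in Ioo (-R) R, ENNReal.ofReal (W (f t) + f'' t ^ 2)) ≠ ⊤ ∧
    e = (∫⁻ t in Ioo (-R) R, ENNReal.ofReal (W (f t) + f'' t ^ 2)).toReal}

/-- The optimal boundary/interior interaction energy `σ(z, ξ)`. -/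
def sigmaConst (W : ℝ → ℝ) (z ξ : ℝ) : ℝ :=
  sInf {e : ℝ | ∃ (f f' f'' : ℝ → ℝ) (R : ℝ), 0 < R ∧
    IsH2ProfileOn (Ioi 0) f f' f'' ∧
    ContinuousWithinAt f (Ici 0) 0 ∧ f 0 = ξ ∧
    (∀ t : ℝ, R ≤ t → f t = z) ∧
    (∫⁻ t in Ioo 0 R, ENNReal.ofReal (W (f t) + f'' t ^ 2)) ≠ ⊤ ∧
    e = (∫⁻ t in Ioo 0 R, ENNReal.ofReal (W (f t) + f'' t ^ 2)).toReal}

/-- Admissible class for the lower boundary-transition constant `c̲`. -/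
def cLowSet (V : ℝ → ℝ) (α β : ℝ) : Set ℝ :=
  {e : ℝ | ∃ (f f' : ℝ → ℝ) (R : ℝ), 0 < R ∧ IsACProfile f f' ∧
    halfSemi f' univ ≠ ⊤ ∧
    (∀ t : ℝ, R ≤ t → f (-t) = α ∧ f t = β) ∧
    e = (1 / 8) * (halfSemi f' (Ioo (-R) R)).toReal + ∫ x in Ioo (-R) R, V (f x)}

/-- The lower boundary-transition constant `c̲`. -/
def cLow (V : ℝ → ℝ) (α β : ℝ) : ℝ := sInf (cLowSet V α β)

/-- Admissible class for the upper boundary-transition constant `c̄`. -/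
def cUpSet (V : ℝ → ℝ) (α β : ℝ) : Set ℝ :=
  {e : ℝ | ∃ (f f' : ℝ → ℝ) (R : ℝ), 0 < R ∧ IsACProfile f f' ∧
    halfSemi f' univ ≠ ⊤ ∧
    (∀ t : ℝ, R ≤ t → f (-t) = α ∧ f t = β) ∧
    e = (7 / 16) * (halfSemi f' univ).toReal + ∫ x, V (f x)}

/-- The upper boundary-transition constant `c̄`. -/
def cUp (V : ℝ → ℝ) (α β : ℝ) : ℝ := sInf (cUpSet V α β)

/-- Hypotheses (H^W) on the interior double-well potential. -/
def HypW (W : ℝ → ℝ) (a b : ℝ) : Prop :=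
  Continuous W ∧ (∀ z, 0 ≤ W z) ∧ a < b ∧ (∀ z, W z = 0 ↔ z = a ∨ z = b) ∧
  ∃ C > (0:ℝ), ∀ z : ℝ, C * |z| ^ 2 - 1 / C ≤ W z

/-- Hypotheses (H^V) on the boundary double-well potential. -/
def HypV (V : ℝ → ℝ) (α β : ℝ) : Prop :=
  Continuous V ∧ (∀ z, 0 ≤ V z) ∧ α < β ∧ (∀ z, V z = 0 ↔ z = α ∨ z = β) ∧
  (∃ C > (0:ℝ), ∀ z : ℝ, C * |z| ^ 2 - 1 / C ≤ V z) ∧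
  ∃ C > (0:ℝ), ∃ ρ > (0:ℝ), ∀ z : ℝ,
    z ∈ Ioo (α - ρ) (α + ρ) ∪ Ioo (β - ρ) (β + ρ) →
      (1 / C) * min |z - α| |z - β| ^ 2 ≤ V z


/-- The one-dimensional interior energy `F_ε(u; I)` on the `H²` class
(written with lower integrals of the nonnegative integrands). -/
def F1D (W : ℝ → ℝ) (ε : ℝ) (u u'' : ℝ → ℝ) (I : Set ℝ) : ℝ≥0∞ :=
  ENNReal.ofReal (ε ^ 3) * ∫⁻ x in I, ENNReal.ofReal (u'' x ^ 2)
  + ENNReal.ofReal (1 / ε) * ∫⁻ x in I, ENNReal.ofReal (W (u x))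

/-- The one-dimensional boundary energy `G_ε(v; J)` on the `H^{3/2}` class. -/
def G1D (V : ℝ → ℝ) (ε lam : ℝ) (v v' : ℝ → ℝ) (J : Set ℝ) : ℝ≥0∞ :=
  ENNReal.ofReal (ε ^ 3 / 8) * halfSemi v' J
  + ENNReal.ofReal lam * ∫⁻ x in J, ENNReal.ofReal (V (v x))

/-- `u ∈ H²(I)`: `u` is differentiable on `I` with derivative `u'`, and `u'` is
absolutely continuous on `I` with a.e. derivative `u''`. -/
def IsH2On (I : Set ℝ) (u u' u'' : ℝ → ℝ) : Prop :=
  (∀ x ∈ I, HasDerivAt u (u' x) x) ∧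
  (∀ s ∈ I, ∀ t ∈ I, IntervalIntegrable u'' volume s t ∧
    u' t - u' s = ∫ x in s..t, u'' x)

/-- `v ∈ H^{3/2}(J)`: `v` is absolutely continuous on `J` with a.e. derivative `v'`,
and `v'` has finite `H^{1/2}(J)` seminorm. -/
def IsH32On (J : Set ℝ) (v v' : ℝ → ℝ) : Prop :=
  (∀ s ∈ J, ∀ t ∈ J, IntervalIntegrable v' volume s t ∧
    v t - v s = ∫ x in s..t, v' x) ∧
  halfSemi v' J ≠ ⊤

/-- `u ∈ BV(I; {c₀, c₁})`: `u` takes only the two values `c₀, c₁` on `I` and is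
locally constant on `I` off a finite set. -/
def BVtwo (I : Set ℝ) (c₀ c₁ : ℝ) (u : ℝ → ℝ) : Prop :=
  (∀ x ∈ I, u x = c₀ ∨ u x = c₁) ∧
  ∃ S : Finset ℝ, ∀ x ∈ I, x ∉ S → ∃ δ > 0, ∀ y ∈ I, |y - x| < δ → u y = u x

/-- Admissible class for the scaled characterization `c⋆⋆` of `c̄`. -/
def cStarStarSet (V : ℝ → ℝ) (α β : ℝ) : Set ℝ :=
  {e : ℝ | ∃ g g' : ℝ → ℝ, IsACProfile g g' ∧ halfSemi g' univ ≠ ⊤ ∧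
    (∀ t : ℝ, 1 ≤ t → g (-t) = α ∧ g t = β) ∧
    e = (3 * (7:ℝ) ^ ((1:ℝ) / 3) / 4)
          * (halfSemi g' univ).toReal ^ ((1:ℝ) / 3)
          * (∫ x : ℝ, V (g x)) ^ ((2:ℝ) / 3)}

/-!
Dilating a profile, `f = g (· / λ)`, multiplies the `H^{1/2}` seminorm `A` of the derivative by
`λ⁻²` and the potential energy `B` by `λ`, and maps each admissible class into the other (only
the size of the transition region changes). By AM–GM, `(7/16) λ⁻² A + λ B` has infimum
`(3·7^{1/3}/4) A^{1/3} B^{2/3}` over `λ > 0`, so the infimum of the energy over the dilates of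
one profile is its `c⋆⋆` value. Since that value is itself invariant under dilation, it lies
below the energy of every profile admissible for `c̄`.
-/

/-- The `c̄`-energy `(7/16) · halfSemi f' univ + ∫ V ∘ f` of the dilate `f = g (· / lam)`,
where `A = halfSemi g' univ` and `B = ∫ V ∘ g`. -/
def dilationEnergy (A B lam : ℝ) : ℝ := 7 / 16 * (lam⁻¹ ^ 2 * A) + lam * B

def starStarValue (A B : ℝ) : ℝ :=
  3 * (7:ℝ) ^ ((1:ℝ) / 3) / 4 * A ^ ((1:ℝ) / 3) * B ^ ((2:ℝ) / 3)

lemma three_quarters_mul_mul_sq_le {u v : ℝ} (hu : 0 ≤ u) (hv : 0 ≤ v) :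
    3 / 4 * u * v ^ 2 ≤ u ^ 3 / 16 + v ^ 3 := by
  -- `u³ + 16 v³ - 12 u v² = (u - 2v)² (u + 4v)`
  nlinarith [mul_nonneg (sq_nonneg (u - 2 * v)) (by positivity : 0 ≤ u + 4 * v)]

lemma rpow_one_div_three_pow_three {x : ℝ} (hx : 0 ≤ x) : (x ^ ((1:ℝ) / 3)) ^ 3 = x := by
  simpa [one_div] using Real.rpow_inv_natCast_pow hx (n := 3) (by norm_num)

lemma starStarValue_eq {A B : ℝ} (hB : 0 ≤ B) :
    starStarValue A B
      = 3 * (7:ℝ) ^ ((1:ℝ) / 3) / 4 * A ^ ((1:ℝ) / 3) * (B ^ ((1:ℝ) / 3)) ^ 2 := by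
  rw [starStarValue, ← Real.rpow_natCast, ← Real.rpow_mul hB]
  norm_num

lemma starStarValue_nonneg {A B : ℝ} (hA : 0 ≤ A) (hB : 0 ≤ B) : 0 ≤ starStarValue A B := by
  unfold starStarValue
  positivity

lemma starStarValue_le_dilationEnergy {A B lam : ℝ} (hA : 0 ≤ A) (hB : 0 ≤ B) (hlam : 0 < lam) :
    starStarValue A B ≤ dilationEnergy A B lam := by
  rw [starStarValue_eq hB, dilationEnergy]
  set c := (7:ℝ) ^ ((1:ℝ) / 3)
  set a := A ^ ((1:ℝ) / 3)
  set b := B ^ ((1:ℝ) / 3)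
  have hc : c ^ 3 = 7 := rpow_one_div_three_pow_three (by norm_num)
  have ha : a ^ 3 = A := rpow_one_div_three_pow_three hA
  have hb : b ^ 3 = B := rpow_one_div_three_pow_three hB
  calc 3 * c / 4 * a * b ^ 2 = 3 / 4 * (c * a) * (lam * b) ^ 2 / lam ^ 2 := by field_simp
    _ ≤ ((c * a) ^ 3 / 16 + (lam * b) ^ 3) / lam ^ 2 := by
      gcongr
      exact three_quarters_mul_mul_sq_le (by positivity) (by positivity)
    _ = 7 / 16 * (lam⁻¹ ^ 2 * A) + lam * B := by
      rw [mul_pow, mul_pow, hc, ha, hb]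
      field_simp

lemma exists_dilationEnergy_eq_starStarValue {A B : ℝ} (hA : 0 < A) (hB : 0 < B) :
    ∃ lam > 0, dilationEnergy A B lam = starStarValue A B := by
  rw [starStarValue_eq hB.le]
  set c := (7:ℝ) ^ ((1:ℝ) / 3)
  set a := A ^ ((1:ℝ) / 3)
  set b := B ^ ((1:ℝ) / 3)
  have hc : c ^ 3 = 7 := rpow_one_div_three_pow_three (by norm_num)
  have ha : a ^ 3 = A := rpow_one_div_three_pow_three hA.le
  have hb : b ^ 3 = B := rpow_one_div_three_pow_three hB.le
  have hc0 : 0 < c := by positivity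
  have ha0 : 0 < a := by positivity
  have hb0 : 0 < b := by positivity
  refine ⟨c * a / (2 * b), by positivity, ?_⟩
  rw [dilationEnergy, ← ha, ← hb]
  field_simp
  rw [hc]
  norm_num

lemma continuous_starStarValue : Continuous fun p : ℝ × ℝ => starStarValue p.1 p.2 := by
  unfold starStarValue
  fun_prop (disch := norm_num)

lemma isGLB_dilationEnergy {A B : ℝ} (hA : 0 ≤ A) (hB : 0 ≤ B) :
    IsGLB (dilationEnergy A B '' Ioi 0) (starStarValue A B) := by
  refine ⟨?_, fun L hL => ?_⟩
  · rintro _ ⟨lam, hlam, rfl⟩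
    exact starStarValue_le_dilationEnergy hA hB hlam
  -- `A` or `B` may vanish, where no dilation is optimal: compare with the optimum at
  -- `(A + δ, B + δ)` and let `δ → 0`.
  have hbound : ∀ δ > 0, L ≤ starStarValue (A + δ) (B + δ) := by
    intro δ hδ
    obtain ⟨lam, hlam, hopt⟩ :=
      exists_dilationEnergy_eq_starStarValue (A := A + δ) (B := B + δ) (by linarith) (by linarith)
    calc L ≤ dilationEnergy A B lam := hL ⟨lam, hlam, rfl⟩
      _ ≤ dilationEnergy (A + δ) (B + δ) lam := by unfold dilationEnergy; gcongr <;> linarith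
      _ = starStarValue (A + δ) (B + δ) := hopt
  have hlim : Tendsto (fun δ => starStarValue (A + δ) (B + δ)) (𝓝[>] 0)
      (𝓝 (starStarValue A B)) := by
    have hcont : Continuous fun δ : ℝ => starStarValue (A + δ) (B + δ) :=
      continuous_starStarValue.comp (f := fun δ : ℝ => (A + δ, B + δ)) (by fun_prop)
    simpa using (hcont.tendsto 0).mono_left nhdsWithin_le_nhds
  exact ge_of_tendsto hlim (eventually_nhdsWithin_of_forall hbound)

lemma halfSemi_const_mul (k : ℝ → ℝ) (c : ℝ) (s : Set ℝ) :
    halfSemi (fun x => c * k x) s = ENNReal.ofReal (c ^ 2) * halfSemi k s := by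
  rw [halfSemi, halfSemi, ← lintegral_const_mul' _ _ ofReal_ne_top]
  congr with p
  rw [← ENNReal.ofReal_mul (sq_nonneg c)]
  ring_nf

lemma halfSemi_comp_mul (k : ℝ → ℝ) {a : ℝ} (ha : a ≠ 0) :
    halfSemi (fun x => k (a * x)) univ = halfSemi k univ := by
  set F : ℝ × ℝ → ℝ≥0∞ := fun p => ENNReal.ofReal ((k p.1 - k p.2) ^ 2 / (p.1 - p.2) ^ 2)
  have hF : ∀ p : ℝ × ℝ, ENNReal.ofReal ((k (a * p.1) - k (a * p.2)) ^ 2 / (p.1 - p.2) ^ 2)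
      = ENNReal.ofReal (a ^ 2) * F (a • p) := by
    intro p
    rw [← ENNReal.ofReal_mul (sq_nonneg a)]
    congr 1
    simp only [Prod.smul_fst, Prod.smul_snd, smul_eq_mul, ← mul_sub, mul_pow]
    rcases eq_or_ne (p.1 - p.2) 0 with h | h
    · simp [h]
    · field_simp
  have hmap : ∫⁻ p : ℝ × ℝ, F (a • p) = ENNReal.ofReal |(a ^ 2)⁻¹| * ∫⁻ p, F p := by
    rw [← (measurableEmbedding_const_smul₀ ha).lintegral_map, Measure.map_addHaar_smul _ ha,
      lintegral_smul_measure, Module.finrank_prod, Module.finrank_self, smul_eq_mul]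
  simp only [halfSemi, univ_prod_univ, Measure.restrict_univ]
  rw [lintegral_congr hF, lintegral_const_mul' _ _ ofReal_ne_top, hmap, ← mul_assoc,
    ← ENNReal.ofReal_mul (sq_nonneg a), abs_inv, abs_sq, mul_inv_cancel₀ (pow_ne_zero 2 ha),
    ENNReal.ofReal_one, one_mul]

lemma IsACProfile.comp_mul {g g' : ℝ → ℝ} (hg : IsACProfile g g') (a : ℝ) :
    IsACProfile (fun x => g (a * x)) (fun x => a * g' (a * x)) := by
  rcases eq_or_ne a 0 with rfl | ha
  · simp [IsACProfile]
  constructor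
  · intro s t
    simpa [mul_div_cancel_left₀ _ ha] using
      ((hg.1 (a * s) (a * t)).comp_mul_left (c := a)).const_mul a
  · intro s t
    rw [intervalIntegral.integral_const_mul, intervalIntegral.mul_integral_comp_mul_left,
      hg.2 (a * s) (a * t)]

lemma csInf_eq_csInf_of_forall_exists_le_of_isGLB {S T : Set ℝ} (hS : BddBelow S) (hT : BddBelow T)
    (hST : ∀ x ∈ S, ∃ y ∈ T, y ≤ x) (hTS : ∀ y ∈ T, ∃ D ⊆ S, D.Nonempty ∧ IsGLB D y) :
    sInf S = sInf T := by
  rcases S.eq_empty_or_nonempty with rfl | ⟨x, hx⟩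
  · have hT : T = ∅ := eq_empty_of_forall_notMem fun y hy => by
      obtain ⟨D, hD, ⟨d, hd⟩, -⟩ := hTS y hy
      exact hD hd
    rw [hT]
  obtain ⟨y, hy, -⟩ := hST x hx
  refine le_antisymm (le_csInf ⟨y, hy⟩ fun y hy => ?_) (le_csInf ⟨x, hx⟩ fun x hx => ?_)
  · obtain ⟨D, hDS, -, hD⟩ := hTS y hy
    exact hD.2 fun d hd => csInf_le hS (hDS hd)
  · obtain ⟨y, hy, hyx⟩ := hST x hx
    exact (csInf_le hT hy).trans hyx

section Energies

variable {V : ℝ → ℝ} {α β : ℝ}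

lemma bddBelow_cUpSet (hV0 : ∀ z, 0 ≤ V z) : BddBelow (cUpSet V α β) := by
  refine ⟨0, ?_⟩
  rintro _ ⟨f, f', R, -, -, -, -, rfl⟩
  have : 0 ≤ ∫ x, V (f x) := integral_nonneg fun x => hV0 (f x)
  positivity

lemma bddBelow_cStarStarSet (hV0 : ∀ z, 0 ≤ V z) : BddBelow (cStarStarSet V α β) := by
  refine ⟨0, ?_⟩
  rintro _ ⟨g, g', -, -, -, rfl⟩
  exact starStarValue_nonneg toReal_nonneg (integral_nonneg fun x => hV0 (g x))

lemma dilationEnergy_mem_cUpSet {g g' : ℝ → ℝ} (hg : IsACProfile g g')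
    (hfin : halfSemi g' univ ≠ ⊤) (hb : ∀ t : ℝ, 1 ≤ t → g (-t) = α ∧ g t = β) {lam : ℝ}
    (hlam : 0 < lam) :
    dilationEnergy (halfSemi g' univ).toReal (∫ x, V (g x)) lam ∈ cUpSet V α β := by
  have hsemi : halfSemi (fun x => lam⁻¹ * g' (lam⁻¹ * x)) univ
      = ENNReal.ofReal (lam⁻¹ ^ 2) * halfSemi g' univ := by
    rw [halfSemi_const_mul (fun x => g' (lam⁻¹ * x)), halfSemi_comp_mul g' (inv_ne_zero hlam.ne')]
  refine ⟨fun x => g (lam⁻¹ * x), fun x => lam⁻¹ * g' (lam⁻¹ * x), lam, hlam, hg.comp_mul _,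
    ?_, fun t ht => ?_, ?_⟩
  · rw [hsemi]
    exact mul_ne_top ofReal_ne_top hfin
  · have h1 : 1 ≤ lam⁻¹ * t := by
      rw [inv_mul_eq_div]
      exact (one_le_div hlam).2 ht
    simpa [mul_neg] using hb _ h1
  · rw [hsemi, toReal_mul, toReal_ofReal (sq_nonneg _),
      Measure.integral_comp_mul_left (fun y => V (g y)), inv_inv, abs_of_pos hlam, smul_eq_mul,
      dilationEnergy]

lemma exists_isGLB_subset_cUpSet {y : ℝ} (hV0 : ∀ z, 0 ≤ V z) (hy : y ∈ cStarStarSet V α β) :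
    ∃ D ⊆ cUpSet V α β, D.Nonempty ∧ IsGLB D y := by
  obtain ⟨g, g', hg, hfin, hb, rfl⟩ := hy
  refine ⟨_, ?_, nonempty_Ioi.image _,
    isGLB_dilationEnergy toReal_nonneg (integral_nonneg fun x => hV0 (g x))⟩
  rintro _ ⟨lam, hlam, rfl⟩
  exact dilationEnergy_mem_cUpSet hg hfin hb hlam

lemma exists_mem_cStarStarSet_le (hV0 : ∀ z, 0 ≤ V z) {e : ℝ} (he : e ∈ cUpSet V α β) :
    ∃ e' ∈ cStarStarSet V α β, e' ≤ e := by
  obtain ⟨f, f', R, hR, hf, hfin, hb, rfl⟩ := he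
  have hsemi : halfSemi (fun x => R * f' (R * x)) univ
      = ENNReal.ofReal (R ^ 2) * halfSemi f' univ := by
    rw [halfSemi_const_mul (fun x => f' (R * x)), halfSemi_comp_mul f' hR.ne']
  have hint : ∫ x, V (f (R * x)) = R⁻¹ * ∫ x, V (f x) := by
    rw [Measure.integral_comp_mul_left (fun y => V (f y)), abs_of_pos (inv_pos.2 hR), smul_eq_mul]
  refine ⟨_, ⟨fun x => f (R * x), fun x => R * f' (R * x), hf.comp_mul R, ?_, fun t ht => ?_,
    rfl⟩, ?_⟩
  · rw [hsemi]
    exact mul_ne_top ofReal_ne_top hfin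
  · simpa [mul_neg] using hb _ (le_mul_of_one_le_right hR.le ht)
  -- `f (R ·)` has seminorm `R² A` and potential energy `B / R`; its dilate by `R` is `f` again.
  change starStarValue (halfSemi (fun x => R * f' (R * x)) univ).toReal (∫ x, V (f (R * x))) ≤ _
  rw [hsemi, toReal_mul, toReal_ofReal (sq_nonneg _), hint]
  have hA : 0 ≤ (halfSemi f' univ).toReal := toReal_nonneg
  have hB : 0 ≤ ∫ x, V (f x) := integral_nonneg fun x => hV0 _
  calc _ ≤ dilationEnergy (R ^ 2 * (halfSemi f' univ).toReal) (R⁻¹ * ∫ x, V (f x)) R :=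
        starStarValue_le_dilationEnergy (by positivity) (by positivity) hR
    _ = _ := by
      rw [dilationEnergy]
      field_simp

end Energies

/-- **characterization of `c̄`.** Under `(H^V)`,
`c̄ = c⋆⋆ := inf{ (3·7^{1/3}/4)·(|g'|²_{H^{1/2}(ℝ)})^{1/3}·(∫_ℝ V(g))^{2/3} }` over
`g ∈ H^{3/2}_loc(ℝ)` with `g(-t) = α`, `g(t) = β` for `t ≥ 1`. -/
theorem cUp_eq_cStarStar (V : ℝ → ℝ) (α β : ℝ) (hV : HypV V α β) :
    cUp V α β = sInf (cStarStarSet V α β) :=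
  have hV0 : ∀ z, 0 ≤ V z := hV.2.1
  csInf_eq_csInf_of_forall_exists_le_of_isGLB (bddBelow_cUpSet hV0) (bddBelow_cStarStarSet hV0)
    (fun _ => exists_mem_cStarStarSet_le hV0) (fun _ => exists_isGLB_subset_cUpSet hV0)

end
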